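/- arXiv:2103.11200 — 5 statements merged into one kernel-verified Lean document; each statement's English description precedes it below -/
import Mathlib

section
/- Define H : (0,∞) → ℝ by H(t) = (1/√(πt)) ∫_{-π/2}^{π/2} exp(-sin²φ / t) · cos(2φ) dφ. Then there exists a constant C > 0 such that for all t > 0, |H(t)| ≤ C · min(1, t^{-3/2}). -/
/-!
For large `t` the integral is `O(1/t)`: because `∫ cos 2φ = 0` one may subtract `1` from
`exp (-sin² φ / t)`, and `|exp (-sin² φ / t) - 1| ≤ 1/t`. For small `t` the integral is `O(√t)`:
by Jordan's inequality the integrand is dominated by the Gaussian `exp (-4 φ² / (π² t))`.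
Dividing by `√(π t)` gives the bounds `π / 2` and `√π · t^(-3/2)`.
-/

open Real MeasureTheory

noncomputable def Hfun (t : ℝ) : ℝ :=
  (1 / Real.sqrt (Real.pi * t)) *
    ∫ φ in (-(Real.pi / 2))..(Real.pi / 2),
      Real.exp (-(Real.sin φ) ^ 2 / t) * Real.cos (2 * φ)

open intervalIntegral

theorem integral_cos_two_mul_neg_pi_div_two :
    ∫ φ in -(π / 2)..π / 2, cos (2 * φ) = 0 := by
  rw [integral_comp_mul_left cos two_ne_zero, integral_cos]
  ring_nf
  simp

theorem abs_exp_neg_sub_one_le {x : ℝ} (hx : 0 ≤ x) : |exp (-x) - 1| ≤ x := by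
  rw [abs_sub_comm, abs_of_nonneg (sub_nonneg.2 (exp_le_one_iff.2 (neg_nonpos.2 hx)))]
  linarith [add_one_le_exp (-x)]

theorem four_div_pi_sq_mul_sq_le_sin_sq {x : ℝ} (hx : |x| ≤ π / 2) :
    4 / π ^ 2 * x ^ 2 ≤ sin x ^ 2 := by
  have h := pow_le_pow_left₀ (by positivity) (mul_abs_le_abs_sin hx) 2
  rw [mul_pow, sq_abs, sq_abs, div_pow] at h
  norm_num at h
  exact h

theorem integral_exp_neg_mul_sq_le {a b c : ℝ} (hab : a ≤ b) (hc : 0 < c) :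
    ∫ x in a..b, exp (-c * x ^ 2) ≤ √(π / c) := by
  rw [integral_of_le hab, ← integral_gaussian]
  exact setIntegral_le_integral (integrable_exp_neg_mul_sq hc)
    (.of_forall fun _ => (exp_pos _).le)

noncomputable def Hintegral (t : ℝ) : ℝ :=
  ∫ φ in -(π / 2)..π / 2, exp (-sin φ ^ 2 / t) * cos (2 * φ)

theorem abs_Hintegral_le_pi_div {t : ℝ} (ht : 0 < t) : |Hintegral t| ≤ π / t := by
  have hcancel : Hintegral t =
      ∫ φ in -(π / 2)..π / 2, (exp (-sin φ ^ 2 / t) - 1) * cos (2 * φ) := by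
    simp only [sub_mul, one_mul]
    rw [intervalIntegral.integral_sub (by apply Continuous.intervalIntegrable; fun_prop)
      (by apply Continuous.intervalIntegrable; fun_prop),
      integral_cos_two_mul_neg_pi_div_two, sub_zero, Hintegral]
  have hbound : ∀ φ, ‖(exp (-sin φ ^ 2 / t) - 1) * cos (2 * φ)‖ ≤ 1 / t := fun φ => by
    rw [neg_div, norm_mul, norm_eq_abs, norm_eq_abs, ← mul_one (1 / t)]
    gcongr
    · exact (abs_exp_neg_sub_one_le (by positivity)).trans
        (div_le_div_of_nonneg_right (sin_sq_le_one φ) ht.le)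
    · exact abs_cos_le_one _
  rw [hcancel, ← norm_eq_abs]
  refine (norm_integral_le_of_norm_le_const fun φ _ => hbound φ).trans_eq ?_
  rw [abs_of_pos (by linarith [pi_pos])]
  field_simp
  ring

theorem abs_Hintegral_le_mul_sqrt {t : ℝ} (ht : 0 < t) :
    |Hintegral t| ≤ π / 2 * √(π * t) := by
  have hab : -(π / 2) ≤ π / 2 := by linarith [pi_pos]
  set c := 4 / (π ^ 2 * t) with hc
  have hgauss : ∀ φ ∈ Set.Icc (-(π / 2)) (π / 2),
      ‖exp (-(sin φ) ^ 2 / t) * cos (2 * φ)‖ ≤ exp (-c * φ ^ 2) := fun φ hφ => by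
    have hsin := four_div_pi_sq_mul_sq_le_sin_sq (abs_le.2 hφ)
    rw [norm_mul, norm_of_nonneg (exp_pos _).le, norm_eq_abs, ← mul_one (exp (-c * φ ^ 2))]
    gcongr
    · rw [neg_mul, neg_div, neg_le_neg_iff, le_div_iff₀ ht]
      calc c * φ ^ 2 * t = 4 / π ^ 2 * φ ^ 2 := by rw [hc]; field_simp
        _ ≤ sin φ ^ 2 := hsin
    · exact abs_cos_le_one _
  calc |Hintegral t|
      ≤ ∫ φ in -(π / 2)..π / 2, exp (-c * φ ^ 2) :=
        norm_integral_le_of_norm_le hab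
          (.of_forall fun φ hφ => hgauss φ (Set.Ioc_subset_Icc_self hφ))
          (by apply Continuous.intervalIntegrable; fun_prop)
    _ ≤ √(π / c) := integral_exp_neg_mul_sq_le hab (by positivity)
    _ = π / 2 * √(π * t) := by
      rw [show π / c = (π / 2) ^ 2 * (π * t) by rw [hc]; field_simp; ring,
        sqrt_mul (by positivity), sqrt_sq (by positivity)]

theorem abs_Hfun_eq {t : ℝ} (ht : 0 < t) : |Hfun t| = |Hintegral t| / √(π * t) := by
  rw [Hfun, abs_mul, abs_of_pos (by positivity), one_div_mul_eq_div, Hintegral]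

theorem abs_Hfun_le_pi_div_two {t : ℝ} (ht : 0 < t) : |Hfun t| ≤ π / 2 := by
  rw [abs_Hfun_eq ht, div_le_iff₀ (by positivity)]
  exact abs_Hintegral_le_mul_sqrt ht

theorem rpow_neg_three_div_two {t : ℝ} (ht : 0 < t) : t ^ (-(3 : ℝ) / 2) = 1 / (t * √t) := by
  rw [show -(3 : ℝ) / 2 = -(1 + 1 / 2) by norm_num, rpow_neg ht.le, rpow_add ht, rpow_one,
    ← sqrt_eq_rpow, one_div]

theorem abs_Hfun_le_sqrt_pi_mul_rpow {t : ℝ} (ht : 0 < t) :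
    |Hfun t| ≤ √π * t ^ (-(3 : ℝ) / 2) := by
  calc |Hfun t| ≤ π / t / √(π * t) := by
        rw [abs_Hfun_eq ht]; gcongr; exact abs_Hintegral_le_pi_div ht
    _ = √π * t ^ (-(3 : ℝ) / 2) := by
        rw [rpow_neg_three_div_two ht, sqrt_mul pi_pos.le]
        nth_rw 1 [← mul_self_sqrt pi_pos.le]
        field_simp

theorem stmt2 : ∃ C : ℝ, 0 < C ∧ ∀ t : ℝ, 0 < t →
    |Hfun t| ≤ C * min 1 (t ^ (-(3 : ℝ) / 2)) := by
  refine ⟨2, two_pos, fun t ht => ?_⟩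
  have hsqrt_pi : √π ≤ 2 := by
    rw [sqrt_le_left zero_le_two]; linarith [pi_le_four]
  rw [mul_min_of_nonneg _ _ zero_le_two, mul_one]
  exact le_min ((abs_Hfun_le_pi_div_two ht).trans (by linarith [pi_le_four]))
    ((abs_Hfun_le_sqrt_pi_mul_rpow ht).trans (by gcongr))
end

section
/- Let H : (0,∞) → ℝ satisfy |H(s)| ≤ C₀ · min(1, s^{-3/2}) for all s > 0, and let α, β ∈ ℝ satisfy α + β ≤ 1, α ≥ -1, β ≥ -1. Then there exists C > 0 (depending on α, β, C₀) such that for all t > 0 and all r, r̄ > 0, z, z̄ ∈ ℝ: (1 / (r^{1/2-α} · r̄^{1/2-β})) · |H(t/(r·r̄))| · exp(-((r-r̄)² + (z-z̄)²)/(4t)) ≤ C · t^{-(1/2 - (α+β)/2)} · exp(-((r-r̄)² + (z-z̄)²)/(5t)). -/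
open Real

lemma aux_exp (u : ℝ) (hu : 0 ≤ u) (m : ℝ) (hm0 : 0 ≤ m) (hm : m ≤ 3/2) :
    u ^ m ≤ 25601 * Real.exp (u / 80) := by
  have he : (1:ℝ) ≤ Real.exp (u / 80) := Real.one_le_exp (by positivity)
  have h2 : u ^ (2:ℝ) ≤ 25600 * Real.exp (u / 80) := by
    have hlin : u ≤ 160 * Real.exp (u / 160) := by
      have := Real.add_one_le_exp (u/160)
      nlinarith [Real.exp_pos (u/160)]
    have hsq : u * u ≤ (160 * Real.exp (u/160)) * (160 * Real.exp (u/160)) := by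
      nlinarith [Real.exp_pos (u/160)]
    calc u ^ (2:ℝ) = u * u := by
          rw [show (2:ℝ) = ((2:ℕ):ℝ) by norm_num, Real.rpow_natCast]; ring
      _ ≤ (160 * Real.exp (u/160)) * (160 * Real.exp (u/160)) := hsq
      _ = 25600 * Real.exp (u/160 + u/160) := by rw [Real.exp_add]; ring
      _ = 25600 * Real.exp (u / 80) := by rw [show u/160 + u/160 = u/80 by ring]
  rcases le_total u 1 with h | h
  · have : u ^ m ≤ 1 := Real.rpow_le_one hu h hm0
    nlinarith
  · have h1 : u ^ m ≤ u ^ (2:ℝ) := Real.rpow_le_rpow_of_exponent_le h (by linarith)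
    nlinarith

lemma min_le_rpow' (s θ : ℝ) (hs : 0 < s) (h0 : 0 ≤ θ) (h32 : θ ≤ 3/2) :
    min 1 (s ^ (-(3:ℝ)/2)) ≤ s ^ (-θ) := by
  rcases le_total 1 s with h | h
  · exact (min_le_right _ _).trans (Real.rpow_le_rpow_of_exponent_le h (by linarith))
  · exact (min_le_left _ _).trans
      (Real.one_le_rpow_of_pos_of_le_one_of_nonpos hs h (by linarith))

lemma step_eq (θ a b t r r' : ℝ) (ht : 0 < t) (hr : 0 < r) (hr' : 0 < r') :
    r ^ (-a) * r' ^ (-b) * (t / (r * r')) ^ (-θ) = r ^ (θ - a) * r' ^ (θ - b) * t ^ (-θ) := by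
  rw [Real.rpow_def_of_pos hr, Real.rpow_def_of_pos hr', Real.rpow_def_of_pos ht,
      Real.rpow_def_of_pos hr, Real.rpow_def_of_pos hr',
      Real.rpow_def_of_pos (show (0:ℝ) < t / (r * r') by positivity),
      ← Real.exp_add, ← Real.exp_add, ← Real.exp_add, ← Real.exp_add]
  congr 1
  rw [Real.log_div ht.ne' (by positivity), Real.log_mul hr.ne' hr'.ne']
  ring

lemma core_far (a b : ℝ) (ha : a ≤ 3/2) (hb : b ≤ 3/2) (hab : 0 ≤ a + b)
    (t r r' : ℝ) (ht : 0 < t) (hr : 0 < r) (hr' : 0 < r') (Q : ℝ) (hQ : (r - r') ^ 2 ≤ Q)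
    (hfar : 2 * r' ≤ r) :
    r ^ (-a) * r' ^ (-b) * min 1 ((t / (r * r')) ^ (-(3:ℝ)/2))
      ≤ 25601 * t ^ (-((a + b) / 2)) * Real.exp (Q / (20 * t)) := by
  set θ := max b ((a+b)/2) with hθ
  have hθ0 : 0 ≤ θ := le_trans (by linarith) (le_max_right _ _)
  have hθ32 : θ ≤ 3/2 := max_le hb (by linarith)
  have hmin : min 1 ((t/(r*r')) ^ (-(3:ℝ)/2)) ≤ (t/(r*r')) ^ (-θ) :=
    min_le_rpow' _ _ (by positivity) hθ0 hθ32
  have h1 : r ^ (-a) * r' ^ (-b) * min 1 ((t/(r*r')) ^ (-(3:ℝ)/2))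
      ≤ r ^ (θ - a) * r' ^ (θ - b) * t ^ (-θ) := by
    rw [← step_eq θ a b t r r' ht hr hr']
    gcongr
  have h2 : r' ^ (θ - b) ≤ r ^ (θ - b) :=
    Real.rpow_le_rpow hr'.le (by linarith) (sub_nonneg.mpr (le_max_left _ _))
  set m := θ - (a+b)/2 with hm
  have hm0 : 0 ≤ m := sub_nonneg.mpr (le_max_right _ _)
  have hm32 : m ≤ 3/2 := by
    have : 0 ≤ (a+b)/2 := by linarith
    simp only [hm]; linarith
  have key : r ^ (θ - a) * r ^ (θ - b) * t ^ (-θ) = (r^2 / t) ^ m * t ^ (-((a+b)/2)) := by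
    rw [Real.rpow_def_of_pos hr, Real.rpow_def_of_pos hr, Real.rpow_def_of_pos ht,
        Real.rpow_def_of_pos (show (0:ℝ) < r^2/t by positivity), Real.rpow_def_of_pos ht,
        ← Real.exp_add, ← Real.exp_add, ← Real.exp_add]
    congr 1
    rw [Real.log_div (by positivity) ht.ne', Real.log_pow, hm]
    push_cast
    ring
  have hQr : r^2/4 ≤ Q := by nlinarith
  have hexp : Real.exp (r^2/t/80) ≤ Real.exp (Q/(20*t)) := by
    apply Real.exp_le_exp.mpr
    rw [div_div, div_le_div_iff₀ (by positivity) (by positivity)]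
    nlinarith
  have hu : (r^2/t) ^ m ≤ 25601 * Real.exp (Q / (20*t)) := by
    calc (r^2/t) ^ m ≤ 25601 * Real.exp (r^2/t/80) := aux_exp _ (by positivity) m hm0 hm32
      _ ≤ 25601 * Real.exp (Q/(20*t)) := by linarith
  calc r ^ (-a) * r' ^ (-b) * min 1 ((t/(r*r')) ^ (-(3:ℝ)/2))
      ≤ r ^ (θ - a) * r' ^ (θ - b) * t ^ (-θ) := h1
    _ ≤ r ^ (θ - a) * r ^ (θ - b) * t ^ (-θ) := by
        gcongr
    _ = (r^2/t) ^ m * t ^ (-((a+b)/2)) := key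
    _ ≤ (25601 * Real.exp (Q/(20*t))) * t ^ (-((a+b)/2)) := by
        gcongr
    _ = 25601 * t ^ (-((a+b)/2)) * Real.exp (Q/(20*t)) := by ring

lemma core (a b : ℝ) (ha : a ≤ 3/2) (hb : b ≤ 3/2) (hab : 0 ≤ a + b)
    (t r r' : ℝ) (ht : 0 < t) (hr : 0 < r) (hr' : 0 < r') (Q : ℝ) (hQ : (r - r') ^ 2 ≤ Q) :
    r ^ (-a) * r' ^ (-b) * min 1 ((t / (r * r')) ^ (-(3:ℝ)/2))
      ≤ 25601 * t ^ (-((a + b) / 2)) * Real.exp (Q / (20 * t)) := by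
  have hQ0 : 0 ≤ Q := le_trans (sq_nonneg _) hQ
  have hE1 : (1:ℝ) ≤ Real.exp (Q/(20*t)) := Real.one_le_exp (by positivity)
  rcases le_or_gt r (2*r') with hA | hA
  · rcases le_or_gt r' (2*r) with hB | hB
    · -- comparable case
      set θ := (a+b)/2 with hθ
      have hθ0 : 0 ≤ θ := by simp only [hθ]; linarith
      have hθ32 : θ ≤ 3/2 := by simp only [hθ]; linarith
      have hmin : min 1 ((t/(r*r')) ^ (-(3:ℝ)/2)) ≤ (t/(r*r')) ^ (-θ) :=
        min_le_rpow' _ _ (by positivity) hθ0 hθ32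
      have h1 : r ^ (-a) * r' ^ (-b) * min 1 ((t/(r*r')) ^ (-(3:ℝ)/2))
          ≤ r ^ (θ - a) * r' ^ (θ - b) * t ^ (-θ) := by
        rw [← step_eq θ a b t r r' ht hr hr']
        gcongr
      set c := θ - a with hc
      have hcb : θ - b = -c := by simp only [hc, hθ]; ring
      have ha' : -(3:ℝ)/2 ≤ a := by linarith
      have hb' : -(3:ℝ)/2 ≤ b := by linarith
      have hcle : c ≤ 3/2 := by simp only [hc, hθ]; linarith
      have hcge : -(3/2 : ℝ) ≤ c := by simp only [hc, hθ]; linarith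
      have hprod : r ^ c * r' ^ (-c) = (r/r') ^ c := by
        rw [Real.div_rpow hr.le hr'.le, Real.rpow_neg hr'.le, div_eq_mul_inv]
      have hd1 : r/r' ≤ 2 := by rw [div_le_iff₀ hr']; linarith
      have hd2 : r'/r ≤ 2 := by rw [div_le_iff₀ hr]; linarith
      have h4 : (2:ℝ) ^ (2:ℝ) = 4 := by
        rw [show (2:ℝ) = ((2:ℕ):ℝ) by norm_num, Real.rpow_natCast]
        norm_num
      have hbound : (r/r') ^ c ≤ 4 := by
        rcases le_total 0 c with hc0 | hc0
        · calc (r/r') ^ c ≤ 2 ^ c := Real.rpow_le_rpow (by positivity) hd1 hc0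
            _ ≤ (2:ℝ) ^ (2:ℝ) := Real.rpow_le_rpow_of_exponent_le one_le_two (by linarith)
            _ = 4 := h4
        · have heq : (r/r') ^ c = (r'/r) ^ (-c) := by
            rw [Real.rpow_neg (by positivity), ← Real.inv_rpow (by positivity), inv_div]
          rw [heq]
          calc (r'/r) ^ (-c) ≤ 2 ^ (-c) := Real.rpow_le_rpow (by positivity) hd2 (by linarith)
            _ ≤ (2:ℝ) ^ (2:ℝ) := Real.rpow_le_rpow_of_exponent_le one_le_two (by linarith)
            _ = 4 := h4
      have htpos : (0:ℝ) < t ^ (-θ) := Real.rpow_pos_of_pos ht _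
      calc r ^ (-a) * r' ^ (-b) * min 1 ((t/(r*r')) ^ (-(3:ℝ)/2))
          ≤ r ^ (θ - a) * r' ^ (θ - b) * t ^ (-θ) := h1
        _ = (r/r') ^ c * t ^ (-θ) := by rw [hcb, ← hprod, hc]
        _ ≤ 4 * t ^ (-θ) := by gcongr
        _ ≤ 25601 * t ^ (-θ) * Real.exp (Q/(20*t)) := by nlinarith
    · -- r' > 2r : far, swapped
      have h := core_far b a hb ha (by linarith) t r' r ht hr' hr Q
        (by rw [show (r'-r)^2 = (r-r')^2 by ring]; exact hQ) (by linarith)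
      rw [add_comm b a, mul_comm r' r] at h
      calc r ^ (-a) * r' ^ (-b) * min 1 ((t/(r*r')) ^ (-(3:ℝ)/2))
          = r' ^ (-b) * r ^ (-a) * min 1 ((t/(r*r')) ^ (-(3:ℝ)/2)) := by ring
        _ ≤ _ := h
  · exact core_far a b ha hb hab t r r' ht hr hr' Q hQ (by linarith)

theorem stmt4 (H : ℝ → ℝ) (C₀ : ℝ)
    (hH : ∀ s : ℝ, 0 < s → |H s| ≤ C₀ * min 1 (s ^ (-(3 : ℝ) / 2)))
    (α β : ℝ) (hαβ : α + β ≤ 1) (hα : -1 ≤ α) (hβ : -1 ≤ β) :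
    ∃ C : ℝ, 0 < C ∧ ∀ t : ℝ, 0 < t → ∀ r : ℝ, 0 < r → ∀ r' : ℝ, 0 < r' → ∀ z z' : ℝ,
      (1 / (r ^ ((1 : ℝ) / 2 - α) * r' ^ ((1 : ℝ) / 2 - β))) * |H (t / (r * r'))| *
          Real.exp (-((r - r') ^ 2 + (z - z') ^ 2) / (4 * t))
        ≤ C * t ^ (-((1 : ℝ) / 2 - (α + β) / 2)) *
          Real.exp (-((r - r') ^ 2 + (z - z') ^ 2) / (5 * t)) := by
  have hC₀ : 0 ≤ C₀ := by
    have h1 := hH 1 one_pos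
    simp [Real.one_rpow] at h1
    exact (abs_nonneg _).trans h1
  refine ⟨(C₀ + 1) * 25601, by positivity, ?_⟩
  intro t ht r hr r' hr' z z'
  set Q := (r - r') ^ 2 + (z - z') ^ 2 with hQdef
  have hQ : (r - r') ^ 2 ≤ Q := by nlinarith [sq_nonneg (z - z')]
  have hQ0 : 0 ≤ Q := le_trans (sq_nonneg _) hQ
  have hs : 0 < t / (r * r') := by positivity
  have hHs := hH _ hs
  have hcore := core ((1:ℝ)/2 - α) ((1:ℝ)/2 - β) (by linarith) (by linarith) (by linarith)
    t r r' ht hr hr' Q hQ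
  rw [show -(((1:ℝ)/2 - α + ((1:ℝ)/2 - β))/2) = -((1:ℝ)/2 - (α+β)/2) by ring] at hcore
  have hrw : 1 / (r ^ ((1:ℝ)/2 - α) * r' ^ ((1:ℝ)/2 - β))
      = r ^ (-((1:ℝ)/2 - α)) * r' ^ (-((1:ℝ)/2 - β)) := by
    rw [Real.rpow_neg hr.le, Real.rpow_neg hr'.le, one_div, mul_inv]
  have hEpos : (0:ℝ) ≤ Real.exp (-Q/(4*t)) := (Real.exp_pos _).le
  have hMpos : (0:ℝ) ≤ min 1 ((t/(r*r')) ^ (-(3:ℝ)/2)) := le_min zero_le_one (by positivity)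
  have htp : (0:ℝ) < t ^ (-((1:ℝ)/2 - (α+β)/2)) := Real.rpow_pos_of_pos ht _
  calc (1 / (r ^ ((1:ℝ)/2 - α) * r' ^ ((1:ℝ)/2 - β))) * |H (t/(r*r'))| * Real.exp (-Q/(4*t))
      = r ^ (-((1:ℝ)/2 - α)) * r' ^ (-((1:ℝ)/2 - β)) * |H (t/(r*r'))| * Real.exp (-Q/(4*t)) := by
        rw [hrw]
    _ ≤ r ^ (-((1:ℝ)/2 - α)) * r' ^ (-((1:ℝ)/2 - β)) *
          (C₀ * min 1 ((t/(r*r')) ^ (-(3:ℝ)/2))) * Real.exp (-Q/(4*t)) := by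
        gcongr
    _ = C₀ * (r ^ (-((1:ℝ)/2 - α)) * r' ^ (-((1:ℝ)/2 - β)) *
          min 1 ((t/(r*r')) ^ (-(3:ℝ)/2))) * Real.exp (-Q/(4*t)) := by ring
    _ ≤ C₀ * (25601 * t ^ (-((1:ℝ)/2 - (α+β)/2)) * Real.exp (Q/(20*t))) *
          Real.exp (-Q/(4*t)) := by
        gcongr
    _ = C₀ * 25601 * t ^ (-((1:ℝ)/2 - (α+β)/2)) *
          (Real.exp (Q/(20*t)) * Real.exp (-Q/(4*t))) := by ring
    _ = C₀ * 25601 * t ^ (-((1:ℝ)/2 - (α+β)/2)) * Real.exp (-Q/(5*t)) := by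
        rw [← Real.exp_add, show Q/(20*t) + -Q/(4*t) = -Q/(5*t) by field_simp; ring]
    _ ≤ (C₀ + 1) * 25601 * t ^ (-((1:ℝ)/2 - (α+β)/2)) * Real.exp (-Q/(5*t)) := by
        have hE5 : (0:ℝ) < Real.exp (-Q/(5*t)) := Real.exp_pos _
        nlinarith
end

section
/- Let H : (0,∞) → ℝ satisfy |H(s)| ≤ C₀ · min(1, s^{-3/2}) for all s > 0, and let α, β ∈ ℝ satisfy α + β ≤ 0, α ≥ -1, β ≥ -1. Then there exists C > 0 such that for all t > 0, r, r̄ > 0, z, z̄ ∈ ℝ: (r̄^{1/2+β} / r^{1/2-α}) · ((|r - r̄| + |z - z̄|)/(2t)) · |H(t/(r·r̄))| · exp(-((r-r̄)² + (z-z̄)²)/(4t)) ≤ C · t^{-(1/2 - (α+β)/2)} · exp(-((r-r̄)² + (z-z̄)²)/(5t)). -/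
open Real

private lemma eq_of_log {x y : ℝ} (hx : 0 < x) (hy : 0 < y) (h : Real.log x = Real.log y) :
    x = y := by rw [← Real.exp_log hx, ← Real.exp_log hy, h]

private lemma aux_ratio {y e : ℝ} (h1 : 1/2 ≤ y) (h2 : y ≤ 2) (he : |e| ≤ 2) :
    y ^ e ≤ 4 := by
  have hy : 0 < y := by linarith
  rw [Real.rpow_def_of_pos hy]
  have hl2 : (0:ℝ) ≤ Real.log 2 := Real.log_nonneg (by norm_num)
  have hlog : |Real.log y| ≤ Real.log 2 := by
    rw [abs_le]
    refine ⟨?_, Real.log_le_log hy h2⟩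
    rw [← Real.log_inv]
    exact Real.log_le_log (by norm_num) (by rw [show (2:ℝ)⁻¹ = 1/2 by norm_num]; exact h1)
  have key : Real.log y * e ≤ Real.log 4 := by
    have h4 : Real.log 4 = Real.log 2 * 2 := by
      rw [show (4:ℝ) = 2^2 by norm_num, Real.log_pow]; push_cast; ring
    calc Real.log y * e ≤ |Real.log y * e| := le_abs_self _
      _ = |Real.log y| * |e| := abs_mul _ _
      _ ≤ Real.log 2 * 2 := mul_le_mul hlog he (abs_nonneg _) hl2
      _ = Real.log 4 := h4.symm
  calc Real.exp (Real.log y * e) ≤ Real.exp (Real.log 4) := Real.exp_le_exp.mpr key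
    _ = 4 := Real.exp_log (by norm_num)

private lemma aux_sq_exp (x : ℝ) (hx : 0 ≤ x) : x^2 ≤ 4 * Real.exp x := by
  have h := Real.add_one_le_exp (x/2)
  have h2 : Real.exp x = Real.exp (x/2) * Real.exp (x/2) := by
    rw [← Real.exp_add]; ring_nf
  nlinarith [Real.exp_pos (x/2)]

private lemma rpow_split {r r' : ℝ} (hr : 0 < r) (hr' : 0 < r') (u v : ℝ) :
    r' ^ (u + v) / r ^ (u - v) = (r'/r) ^ u * (r*r') ^ v := by
  have p1 := Real.rpow_pos_of_pos hr' (u+v)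
  have p2 := Real.rpow_pos_of_pos hr (u-v)
  have p3 := Real.rpow_pos_of_pos (div_pos hr' hr) u
  have p4 := Real.rpow_pos_of_pos (mul_pos hr hr') v
  apply eq_of_log (div_pos p1 p2) (mul_pos p3 p4)
  rw [Real.log_div p1.ne' p2.ne', Real.log_mul p3.ne' p4.ne',
    Real.log_rpow hr', Real.log_rpow hr, Real.log_rpow (div_pos hr' hr),
    Real.log_rpow (mul_pos hr hr'), Real.log_div hr'.ne' hr.ne',
    Real.log_mul hr.ne' hr'.ne']
  ring

private lemma prod_id {t r r' : ℝ} (α β : ℝ) (ht : 0 < t) (hr : 0 < r) (hr' : 0 < r') :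
    r' ^ ((1:ℝ)/2+β) / r ^ ((1:ℝ)/2-α) * (r*r'/t) ^ ((3:ℝ)/2)
      = r' ^ ((2:ℝ)+β) * r ^ ((1:ℝ)+α) / t ^ ((3:ℝ)/2) := by
  have p1 := Real.rpow_pos_of_pos hr' ((1:ℝ)/2+β)
  have p2 := Real.rpow_pos_of_pos hr ((1:ℝ)/2-α)
  have p3 := Real.rpow_pos_of_pos (div_pos (mul_pos hr hr') ht) ((3:ℝ)/2)
  have p4 := Real.rpow_pos_of_pos hr' ((2:ℝ)+β)
  have p5 := Real.rpow_pos_of_pos hr ((1:ℝ)+α)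
  have p6 := Real.rpow_pos_of_pos ht ((3:ℝ)/2)
  apply eq_of_log (by positivity) (by positivity)
  rw [Real.log_mul (div_pos p1 p2).ne' p3.ne', Real.log_div p1.ne' p2.ne',
    Real.log_div (mul_pos p4 p5).ne' p6.ne', Real.log_mul p4.ne' p5.ne',
    Real.log_rpow hr', Real.log_rpow hr, Real.log_rpow hr', Real.log_rpow hr,
    Real.log_rpow (div_pos (mul_pos hr hr') ht), Real.log_rpow ht,
    Real.log_div (mul_pos hr hr').ne' ht.ne', Real.log_mul hr.ne' hr'.ne']
  ring

private lemma lemB {t a b : ℝ} (ht : 0 < t) (ha : 0 ≤ a) (hb : 0 ≤ b) :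
    (a+b)/(2*t) ≤ 20 * t ^ (-(1:ℝ)/2) * Real.exp ((a^2+b^2)/(40*t)) := by
  have hst : 0 < Real.sqrt t := Real.sqrt_pos.mpr ht
  have hs2 : Real.sqrt t * Real.sqrt t = t := Real.mul_self_sqrt ht.le
  have hrp : t ^ (-(1:ℝ)/2) = (Real.sqrt t)⁻¹ := by
    rw [show (-(1:ℝ)/2) = -(1/2) by ring, Real.rpow_neg ht.le, ← Real.sqrt_eq_rpow]
  rw [hrp]
  have hexp : (1:ℝ) + (a^2+b^2)/(40*t) ≤ Real.exp ((a^2+b^2)/(40*t)) := by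
    have := Real.add_one_le_exp ((a^2+b^2)/(40*t)); linarith
  have key : (a+b) * Real.sqrt t ≤ 40*t + (a^2+b^2) := by
    nlinarith [sq_nonneg (a - Real.sqrt t), sq_nonneg (b - Real.sqrt t)]
  have step : (a+b)/(2*t) ≤ 20 * (Real.sqrt t)⁻¹ * (1 + (a^2+b^2)/(40*t)) := by
    rw [div_le_iff₀ (by positivity)]
    have heq : 20 * (Real.sqrt t)⁻¹ * (1 + (a^2+b^2)/(40*t)) * (2*t)
        = (40*t + (a^2+b^2)) / Real.sqrt t := by
      field_simp
      ring
    rw [heq, le_div_iff₀ hst]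
    calc (a+b) * Real.sqrt t ≤ 40*t + (a^2+b^2) := key
      _ = _ := by ring_nf
  calc (a+b)/(2*t) ≤ 20 * (Real.sqrt t)⁻¹ * (1 + (a^2+b^2)/(40*t)) := step
    _ ≤ 20 * (Real.sqrt t)⁻¹ * Real.exp ((a^2+b^2)/(40*t)) := by
        apply mul_le_mul_of_nonneg_left hexp (by positivity)


private lemma step_final {x E : ℝ} (hx : 0 < x) (hE : 1 ≤ E) :
    4 * x ≤ 102400 * x * E := by nlinarith

private lemma lemA {t r r' α β : ℝ} (hαβ : α + β ≤ 0) (hα : -1 ≤ α) (hβ : -1 ≤ β)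
    (ht : 0 < t) (hr : 0 < r) (hr' : 0 < r') :
    (r' ^ ((1:ℝ)/2+β) / r ^ ((1:ℝ)/2-α)) * min 1 ((t/(r*r')) ^ (-(3:ℝ)/2))
      ≤ 102400 * t ^ ((α+β)/2) * Real.exp ((r-r')^2/(40*t)) := by
  have hα1 : α ≤ 1 := by linarith
  have hβ1 : β ≤ 1 := by linarith
  have hx : 0 < r*r'/t := by positivity
  have hA : 0 < r' ^ ((1:ℝ)/2+β) / r ^ ((1:ℝ)/2-α) :=
    div_pos (Real.rpow_pos_of_pos hr' _) (Real.rpow_pos_of_pos hr _)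
  have hT : 0 < t ^ ((α+β)/2) := Real.rpow_pos_of_pos ht _
  have hE1 : 1 ≤ Real.exp ((r-r')^2/(40*t)) :=
    Real.one_le_exp (by positivity)
  have hmin : (t/(r*r')) ^ (-(3:ℝ)/2) = (r*r'/t) ^ ((3:ℝ)/2) := by
    rw [show t/(r*r') = (r*r'/t)⁻¹ from by rw [inv_div],
      Real.inv_rpow hx.le, ← Real.rpow_neg hx.le]
    norm_num
  rw [hmin]
  have he : |(1+β-α)/2| ≤ 2 := by rw [abs_le]; constructor <;> linarith
  by_cases hnear : r ≤ 2*r' ∧ r' ≤ 2*r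
  · -- near case
    obtain ⟨hn1, hn2⟩ := hnear
    have hy1 : 1/2 ≤ r'/r := by rw [le_div_iff₀ hr]; linarith
    have hy2 : r'/r ≤ 2 := by rw [div_le_iff₀ hr]; linarith
    have hratio : (r'/r) ^ ((1+β-α)/2) ≤ 4 := aux_ratio hy1 hy2 he
    have hratio0 : 0 ≤ (r'/r) ^ ((1+β-α)/2) :=
      (Real.rpow_pos_of_pos (div_pos hr' hr) _).le
    by_cases hcase : t ≤ r*r'
    · -- min ≤ 1
      have hAeq : r' ^ ((1:ℝ)/2+β) / r ^ ((1:ℝ)/2-α)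
          = (r'/r) ^ ((1+β-α)/2) * (r*r') ^ ((α+β)/2) := by
        rw [← rpow_split hr hr' ((1+β-α)/2) ((α+β)/2)]
        rw [show (1+β-α)/2 + (α+β)/2 = (1:ℝ)/2+β by ring,
          show (1+β-α)/2 - (α+β)/2 = (1:ℝ)/2-α by ring]
      have h1 : (r*r') ^ ((α+β)/2) ≤ t ^ ((α+β)/2) :=
        Real.rpow_le_rpow_of_nonpos ht hcase (by linarith)
      calc (r' ^ ((1:ℝ)/2+β) / r ^ ((1:ℝ)/2-α)) * min 1 ((r*r'/t) ^ ((3:ℝ)/2))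
          ≤ (r' ^ ((1:ℝ)/2+β) / r ^ ((1:ℝ)/2-α)) * 1 :=
            mul_le_mul_of_nonneg_left (min_le_left _ _) hA.le
        _ = (r'/r) ^ ((1+β-α)/2) * (r*r') ^ ((α+β)/2) := by rw [mul_one, hAeq]
        _ ≤ 4 * t ^ ((α+β)/2) := by
            apply mul_le_mul hratio h1 (Real.rpow_pos_of_pos (mul_pos hr hr') _).le
              (by norm_num)
        _ ≤ 102400 * t ^ ((α+β)/2) * Real.exp ((r-r')^2/(40*t)) := step_final hT hE1
    · -- r*r' ≤ t, min ≤ (r r'/t)^{3/2}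
      have hcase' : r*r' ≤ t := le_of_not_ge hcase
      have hBeq : r' ^ ((2:ℝ)+β) * r ^ ((1:ℝ)+α)
          = (r'/r) ^ ((1+β-α)/2) * (r*r') ^ ((3+α+β)/2) := by
        rw [← rpow_split hr hr' ((1+β-α)/2) ((3+α+β)/2),
          show (1+β-α)/2 + (3+α+β)/2 = (2:ℝ)+β by ring,
          show (1+β-α)/2 - (3+α+β)/2 = -((1:ℝ)+α) by ring,
          Real.rpow_neg hr.le, div_eq_mul_inv, inv_inv]
      have h1 : (r*r') ^ ((3+α+β)/2) ≤ t ^ ((3+α+β)/2) :=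
        Real.rpow_le_rpow (by positivity) hcase' (by linarith)
      have hts : t ^ ((3+α+β)/2) = t ^ ((3:ℝ)/2) * t ^ ((α+β)/2) := by
        rw [← Real.rpow_add ht]; congr 1; ring
      have ht32 : 0 < t ^ ((3:ℝ)/2) := Real.rpow_pos_of_pos ht _
      calc (r' ^ ((1:ℝ)/2+β) / r ^ ((1:ℝ)/2-α)) * min 1 ((r*r'/t) ^ ((3:ℝ)/2))
          ≤ (r' ^ ((1:ℝ)/2+β) / r ^ ((1:ℝ)/2-α)) * (r*r'/t) ^ ((3:ℝ)/2) :=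
            mul_le_mul_of_nonneg_left (min_le_right _ _) hA.le
        _ = r' ^ ((2:ℝ)+β) * r ^ ((1:ℝ)+α) / t ^ ((3:ℝ)/2) := prod_id α β ht hr hr'
        _ = (r'/r) ^ ((1+β-α)/2) * (r*r') ^ ((3+α+β)/2) / t ^ ((3:ℝ)/2) := by rw [hBeq]
        _ ≤ 4 * t ^ ((3+α+β)/2) / t ^ ((3:ℝ)/2) := by
            apply (div_le_div_iff_of_pos_right ht32).mpr
            exact mul_le_mul hratio h1 (Real.rpow_pos_of_pos (mul_pos hr hr') _).le
              (by norm_num)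
        _ = 4 * t ^ ((α+β)/2) := by
            rw [hts, show (4:ℝ) * (t^((3:ℝ)/2) * t^((α+β)/2))
                = 4 * t^((α+β)/2) * t^((3:ℝ)/2) by ring,
              mul_div_assoc, div_self ht32.ne', mul_one]
        _ ≤ 102400 * t ^ ((α+β)/2) * Real.exp ((r-r')^2/(40*t)) := step_final hT hE1
  · -- far case
    have hf : 2*r' < r ∨ 2*r < r' := by
      rcases not_and_or.mp hnear with h | h
      · exact Or.inl (by linarith [lt_of_not_ge h])
      · exact Or.inr (by linarith [lt_of_not_ge h])
    set M := max r r' with hMdef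
    have hrM : r ≤ M := le_max_left _ _
    have hr'M : r' ≤ M := le_max_right _ _
    have hM : 0 < M := lt_of_lt_of_le hr hrM
    have hM2 : M^2 ≤ 4*(r-r')^2 := by
      rcases hf with h | h
      · have hMr : M = r := max_eq_left (by linarith)
        rw [hMr]; nlinarith
      · have hMr : M = r' := max_eq_right (by linarith)
        rw [hMr]; nlinarith
    have ht32 : 0 < t ^ ((3:ℝ)/2) := Real.rpow_pos_of_pos ht _
    -- bound by M powers
    have hb1 : r' ^ ((2:ℝ)+β) ≤ M ^ ((2:ℝ)+β) :=
      Real.rpow_le_rpow hr'.le hr'M (by linarith)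
    have hb2 : r ^ ((1:ℝ)+α) ≤ M ^ ((1:ℝ)+α) :=
      Real.rpow_le_rpow hr.le hrM (by linarith)
    have hMM : M ^ ((2:ℝ)+β) * M ^ ((1:ℝ)+α) = M ^ (3+α+β) := by
      rw [← Real.rpow_add hM]; congr 1; ring
    set v : ℝ := M^2/t with hvdef
    have hv : 0 ≤ v := by positivity
    have e1 : (M^2 : ℝ) ^ ((3+α+β)/2) = M ^ (3+α+β) := by
      rw [← Real.rpow_natCast M 2, ← Real.rpow_mul hM.le]
      congr 1; push_cast; ring
    have e2 : v ^ ((3+α+β)/2) = (M^2:ℝ) ^ ((3+α+β)/2) / t ^ ((3+α+β)/2) := by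
      rw [hvdef, Real.div_rpow (by positivity) ht.le]
    have e3 : t ^ ((3+α+β)/2) = t ^ ((3:ℝ)/2) * t ^ ((α+β)/2) := by
      rw [← Real.rpow_add ht]; congr 1; ring
    have e4 : v ^ ((3+α+β)/2) * t ^ ((3+α+β)/2) = M ^ (3+α+β) := by
      rw [e2, e1]; exact div_mul_cancel₀ _ (Real.rpow_pos_of_pos ht _).ne'
    have hvexp : v ^ ((3+α+β)/2) ≤ 102400 * Real.exp (v/160) := by
      have hexp1 : 1 ≤ Real.exp (v/160) := Real.one_le_exp (by positivity)
      by_cases hv1 : v ≤ 1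
      · have := Real.rpow_le_one hv hv1 (by linarith : (0:ℝ) ≤ (3+α+β)/2)
        linarith
      · have h1v : 1 ≤ v := le_of_not_ge hv1
        have hs1 : v ^ ((3+α+β)/2) ≤ v ^ (2:ℝ) :=
          Real.rpow_le_rpow_of_exponent_le h1v (by linarith)
        have hs2 : v ^ (2:ℝ) = v^2 := by
          rw [show (2:ℝ) = ((2:ℕ):ℝ) by norm_num, Real.rpow_natCast]
        have hs3 := aux_sq_exp (v/160) (by positivity)
        have hs4 : (v/160)^2 = v^2/25600 := by ring
        calc v ^ ((3+α+β)/2) ≤ v ^ (2:ℝ) := hs1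
          _ = v^2 := hs2
          _ ≤ 102400 * Real.exp (v/160) := by linarith
    have hve : Real.exp (v/160) ≤ Real.exp ((r-r')^2/(40*t)) := by
      apply Real.exp_le_exp.mpr
      rw [hvdef, div_div]
      rw [div_le_div_iff₀ (by positivity) (by positivity)]
      have h5 := mul_le_mul_of_nonneg_right hM2 ht.le
      nlinarith [h5]
    calc (r' ^ ((1:ℝ)/2+β) / r ^ ((1:ℝ)/2-α)) * min 1 ((r*r'/t) ^ ((3:ℝ)/2))
        ≤ (r' ^ ((1:ℝ)/2+β) / r ^ ((1:ℝ)/2-α)) * (r*r'/t) ^ ((3:ℝ)/2) :=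
          mul_le_mul_of_nonneg_left (min_le_right _ _) hA.le
      _ = r' ^ ((2:ℝ)+β) * r ^ ((1:ℝ)+α) / t ^ ((3:ℝ)/2) := prod_id α β ht hr hr'
      _ ≤ M ^ ((2:ℝ)+β) * M ^ ((1:ℝ)+α) / t ^ ((3:ℝ)/2) := by
          apply (div_le_div_iff_of_pos_right ht32).mpr
          exact mul_le_mul hb1 hb2 (Real.rpow_pos_of_pos hr _).le
            (Real.rpow_pos_of_pos hM _).le
      _ = v ^ ((3+α+β)/2) * t ^ ((α+β)/2) := by
          rw [hMM, ← e4, e3,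
            show v ^ ((3+α+β)/2) * (t ^ ((3:ℝ)/2) * t ^ ((α+β)/2))
              = v ^ ((3+α+β)/2) * t ^ ((α+β)/2) * t ^ ((3:ℝ)/2) by ring,
            mul_div_assoc, div_self ht32.ne', mul_one]
      _ ≤ (102400 * Real.exp ((r-r')^2/(40*t))) * t ^ ((α+β)/2) := by
          apply mul_le_mul_of_nonneg_right ?_ hT.le
          calc v ^ ((3+α+β)/2) ≤ 102400 * Real.exp (v/160) := hvexp
            _ ≤ 102400 * Real.exp ((r-r')^2/(40*t)) :=
              mul_le_mul_of_nonneg_left hve (by norm_num)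
      _ = 102400 * t ^ ((α+β)/2) * Real.exp ((r-r')^2/(40*t)) := by ring

theorem stmt5 (H : ℝ → ℝ) (C₀ : ℝ)
    (hH : ∀ s : ℝ, 0 < s → |H s| ≤ C₀ * min 1 (s ^ (-(3 : ℝ) / 2)))
    (α β : ℝ) (hαβ : α + β ≤ 0) (hα : -1 ≤ α) (hβ : -1 ≤ β) :
    ∃ C : ℝ, 0 < C ∧ ∀ t : ℝ, 0 < t → ∀ r : ℝ, 0 < r → ∀ r' : ℝ, 0 < r' → ∀ z z' : ℝ,
      (r' ^ ((1 : ℝ) / 2 + β) / r ^ ((1 : ℝ) / 2 - α)) *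
          ((|r - r'| + |z - z'|) / (2 * t)) * |H (t / (r * r'))| *
          Real.exp (-((r - r') ^ 2 + (z - z') ^ 2) / (4 * t))
        ≤ C * t ^ (-((1 : ℝ) / 2 - (α + β) / 2)) *
          Real.exp (-((r - r') ^ 2 + (z - z') ^ 2) / (5 * t)) := by
  have hC₀ : 0 ≤ C₀ := by
    have h1 := hH 1 one_pos
    rw [Real.one_rpow, min_self, mul_one] at h1
    exact (abs_nonneg _).trans h1
  refine ⟨2048000 * C₀ + 1, by linarith, ?_⟩
  intro t ht r hr r' hr' z z'
  have hs : 0 < t / (r * r') := by positivity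
  have hHb := hH _ hs
  have hA := lemA hαβ hα hβ ht hr hr'
  have hB := lemB ht (abs_nonneg (r - r')) (abs_nonneg (z - z'))
  rw [sq_abs, sq_abs] at hB
  have hABn : 0 ≤ (r' ^ ((1 : ℝ) / 2 + β) / r ^ ((1 : ℝ) / 2 - α)) *
      ((|r - r'| + |z - z'|) / (2 * t)) := by positivity
  have hpow : t ^ ((α + β) / 2) * t ^ (-(1 : ℝ) / 2)
      = t ^ (-((1 : ℝ) / 2 - (α + β) / 2)) := by
    rw [← Real.rpow_add ht]; congr 1; ring
  have hee : Real.exp (((r - r') ^ 2 + (z - z') ^ 2) / (40 * t)) *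
        Real.exp (((r - r') ^ 2 + (z - z') ^ 2) / (40 * t)) *
        Real.exp (-((r - r') ^ 2 + (z - z') ^ 2) / (4 * t))
      = Real.exp (-((r - r') ^ 2 + (z - z') ^ 2) / (5 * t)) := by
    rw [← Real.exp_add, ← Real.exp_add]; congr 1; field_simp; ring
  have hexple : Real.exp ((r - r') ^ 2 / (40 * t))
      ≤ Real.exp (((r - r') ^ 2 + (z - z') ^ 2) / (40 * t)) := by
    apply Real.exp_le_exp.mpr
    exact (div_le_div_iff_of_pos_right (by positivity)).mpr (le_add_of_nonneg_right (sq_nonneg _))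
  have h9 : 0 ≤ t ^ (-((1 : ℝ) / 2 - (α + β) / 2)) *
      Real.exp (-((r - r') ^ 2 + (z - z') ^ 2) / (5 * t)) := by positivity
  calc (r' ^ ((1 : ℝ) / 2 + β) / r ^ ((1 : ℝ) / 2 - α)) *
          ((|r - r'| + |z - z'|) / (2 * t)) * |H (t / (r * r'))| *
          Real.exp (-((r - r') ^ 2 + (z - z') ^ 2) / (4 * t))
      ≤ (r' ^ ((1 : ℝ) / 2 + β) / r ^ ((1 : ℝ) / 2 - α)) *
          ((|r - r'| + |z - z'|) / (2 * t)) *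
          (C₀ * min 1 ((t / (r * r')) ^ (-(3 : ℝ) / 2))) *
          Real.exp (-((r - r') ^ 2 + (z - z') ^ 2) / (4 * t)) :=
        mul_le_mul_of_nonneg_right (mul_le_mul_of_nonneg_left hHb hABn)
          (Real.exp_nonneg _)
    _ = C₀ * (((r' ^ ((1 : ℝ) / 2 + β) / r ^ ((1 : ℝ) / 2 - α)) *
          min 1 ((t / (r * r')) ^ (-(3 : ℝ) / 2))) *
          ((|r - r'| + |z - z'|) / (2 * t))) *
          Real.exp (-((r - r') ^ 2 + (z - z') ^ 2) / (4 * t)) := by ring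
    _ ≤ C₀ * ((102400 * t ^ ((α + β) / 2) * Real.exp ((r - r') ^ 2 / (40 * t))) *
          (20 * t ^ (-(1 : ℝ) / 2) *
            Real.exp (((r - r') ^ 2 + (z - z') ^ 2) / (40 * t)))) *
          Real.exp (-((r - r') ^ 2 + (z - z') ^ 2) / (4 * t)) := by
        refine mul_le_mul_of_nonneg_right
          (mul_le_mul_of_nonneg_left ?_ hC₀) (Real.exp_nonneg _)
        exact mul_le_mul hA hB (by positivity) (by positivity)
    _ ≤ C₀ * ((102400 * t ^ ((α + β) / 2) *
            Real.exp (((r - r') ^ 2 + (z - z') ^ 2) / (40 * t))) *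
          (20 * t ^ (-(1 : ℝ) / 2) *
            Real.exp (((r - r') ^ 2 + (z - z') ^ 2) / (40 * t)))) *
          Real.exp (-((r - r') ^ 2 + (z - z') ^ 2) / (4 * t)) := by
        refine mul_le_mul_of_nonneg_right
          (mul_le_mul_of_nonneg_left ?_ hC₀) (Real.exp_nonneg _)
        refine mul_le_mul_of_nonneg_right ?_ (by positivity)
        exact mul_le_mul_of_nonneg_left hexple (by positivity)
    _ = 2048000 * C₀ * (t ^ ((α + β) / 2) * t ^ (-(1 : ℝ) / 2)) *
          (Real.exp (((r - r') ^ 2 + (z - z') ^ 2) / (40 * t)) *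
            Real.exp (((r - r') ^ 2 + (z - z') ^ 2) / (40 * t)) *
            Real.exp (-((r - r') ^ 2 + (z - z') ^ 2) / (4 * t))) := by ring
    _ = 2048000 * C₀ * t ^ (-((1 : ℝ) / 2 - (α + β) / 2)) *
          Real.exp (-((r - r') ^ 2 + (z - z') ^ 2) / (5 * t)) := by rw [hpow, hee]
    _ ≤ (2048000 * C₀ + 1) * t ^ (-((1 : ℝ) / 2 - (α + β) / 2)) *
          Real.exp (-((r - r') ^ 2 + (z - z') ^ 2) / (5 * t)) := by nlinarith [h9]
end

section
/- Let f : ℝ³ → ℝ be axisymmetric with r f ∈ L²(ℝ³) and r^{-2} f ∈ L¹(ℝ³). Then f ∈ L^{3/2}(ℝ³) and ‖f‖_{L^{3/2}(ℝ³)} ≤ ‖r f‖_{L²(ℝ³)}^{2/3} · ‖r^{-2} f‖_{L¹(ℝ³)}^{1/3}. -/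
/-!
In cylindrical coordinates `dx = 2π r dr dz`, so with `p = (r, z)` the three norms are
weighted integrals over the half-plane `r > 0`. Pointwise
`|f|^{3/2} r = √(r³ |f|²) · √(|f| / r)`, and the two factors are square-integrable exactly by
the hypotheses; Cauchy–Schwarz then gives
`(∫ |f|^{3/2} r)² ≤ (∫ r³ |f|²) (∫ |f| / r)`, and taking cube roots yields the claim.
-/

open MeasureTheory Real

noncomputable def muOmega : Measure (ℝ × ℝ) :=
  MeasureTheory.volume.restrict {p : ℝ × ℝ | 0 < p.1}

section SqrtMulSqrt

variable {α : Type*} [MeasurableSpace α] {μ : Measure α} {u v : α → ℝ}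

theorem memLp_two_sqrt (hu : Integrable u μ) (hu0 : 0 ≤ᵐ[μ] u) :
    MemLp (fun x => √(u x)) 2 μ := by
  refine (memLp_two_iff_integrable_sq
    (continuous_sqrt.comp_aestronglyMeasurable hu.aestronglyMeasurable)).2 (hu.congr ?_)
  filter_upwards [hu0] with x hx
  exact (sq_sqrt hx).symm

theorem integrable_sqrt_mul_sqrt (hu : Integrable u μ) (hv : Integrable v μ)
    (hu0 : 0 ≤ᵐ[μ] u) (hv0 : 0 ≤ᵐ[μ] v) : Integrable (fun x => √(u x) * √(v x)) μ :=
  (memLp_two_sqrt hu hu0).integrable_mul (memLp_two_sqrt hv hv0)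

theorem sq_integral_sqrt_mul_sqrt_le (hu : Integrable u μ) (hv : Integrable v μ)
    (hu0 : 0 ≤ᵐ[μ] u) (hv0 : 0 ≤ᵐ[μ] v) :
    (∫ x, √(u x) * √(v x) ∂μ) ^ 2 ≤ (∫ x, u x ∂μ) * ∫ x, v x ∂μ := by
  have integral_sqrt_rpow_two {w : α → ℝ} (hw0 : 0 ≤ᵐ[μ] w) :
      ∫ x, √(w x) ^ (2 : ℝ) ∂μ = ∫ x, w x ∂μ := by
    refine integral_congr_ae ?_
    filter_upwards [hw0] with x hx
    rw [rpow_two, sq_sqrt hx]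
  have holder := integral_mul_le_Lp_mul_Lq_of_nonneg HolderConjugate.two_two
    (Filter.Eventually.of_forall fun x => sqrt_nonneg (u x))
    (Filter.Eventually.of_forall fun x => sqrt_nonneg (v x))
    (by simpa using memLp_two_sqrt hu hu0) (by simpa using memLp_two_sqrt hv hv0)
  rw [integral_sqrt_rpow_two hu0, integral_sqrt_rpow_two hv0, ← mul_rpow
    (integral_nonneg_of_ae hu0) (integral_nonneg_of_ae hv0), ← sqrt_eq_rpow] at holder
  calc (∫ x, √(u x) * √(v x) ∂μ) ^ 2
      ≤ √((∫ x, u x ∂μ) * ∫ x, v x ∂μ) ^ 2 :=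
        pow_le_pow_left₀ (integral_nonneg fun x => by positivity) holder 2
    _ = (∫ x, u x ∂μ) * ∫ x, v x ∂μ :=
        sq_sqrt (mul_nonneg (integral_nonneg_of_ae hu0) (integral_nonneg_of_ae hv0))

end SqrtMulSqrt

theorem rpow_three_halves_mul_eq_sqrt_mul_sqrt {a r : ℝ} (ha : 0 ≤ a) (hr : 0 < r) :
    a ^ ((3 : ℝ) / 2) * r = √((r * a) ^ 2 * r) * √(a / r) := by
  have hsr : √r ≠ 0 := (sqrt_pos.2 hr).ne'
  rw [sqrt_mul (by positivity), sqrt_sq (by positivity), sqrt_div ha,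
    show (3 : ℝ) / 2 = 1 + 1 / 2 by norm_num, rpow_add' ha (by norm_num), rpow_one,
    ← sqrt_eq_rpow]
  field_simp

theorem rpow_two_div_three_le_of_sq_le_mul {c I J K : ℝ} (hc : 0 ≤ c) (hI : 0 ≤ I)
    (hJ : 0 ≤ J) (hK : 0 ≤ K) (h : I ^ 2 ≤ J * K) :
    (c * I) ^ ((2 : ℝ) / 3) ≤
      ((c * J) ^ ((1 : ℝ) / 2)) ^ ((2 : ℝ) / 3) * (c * K) ^ ((1 : ℝ) / 3) := by
  have lhs : (c * I) ^ ((2 : ℝ) / 3) = ((c * I) ^ 2) ^ ((1 : ℝ) / 3) := by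
    rw [← rpow_natCast, ← rpow_mul (by positivity)]
    norm_num
  have rhs : ((c * J) ^ ((1 : ℝ) / 2)) ^ ((2 : ℝ) / 3) * (c * K) ^ ((1 : ℝ) / 3)
      = (c * J * (c * K)) ^ ((1 : ℝ) / 3) := by
    rw [← rpow_mul (by positivity), show (1 : ℝ) / 2 * (2 / 3) = 1 / 3 by norm_num,
      ← mul_rpow (by positivity) (by positivity)]
  rw [lhs, rhs]
  refine rpow_le_rpow (by positivity) ?_ (by norm_num)
  calc (c * I) ^ 2 = c ^ 2 * I ^ 2 := by ring
    _ ≤ c ^ 2 * (J * K) := by gcongr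
    _ = c * J * (c * K) := by ring

theorem stmt8 (f : ℝ × ℝ → ℝ)
    (h1 : Integrable (fun p => (p.1 * |f p|) ^ 2 * p.1) muOmega)
    (h2 : Integrable (fun p => |f p| / p.1) muOmega) :
    Integrable (fun p => |f p| ^ ((3 : ℝ) / 2) * p.1) muOmega ∧
      (2 * π * ∫ p, |f p| ^ ((3 : ℝ) / 2) * p.1 ∂muOmega) ^ ((2 : ℝ) / 3)
        ≤ ((2 * π * ∫ p, (p.1 * |f p|) ^ 2 * p.1 ∂muOmega) ^ ((1 : ℝ) / 2)) ^ ((2 : ℝ) / 3) *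
          (2 * π * ∫ p, |f p| / p.1 ∂muOmega) ^ ((1 : ℝ) / 3) := by
  have hr : ∀ᵐ p ∂muOmega, 0 < p.1 :=
    ae_restrict_mem (measurableSet_lt measurable_const measurable_fst)
  have h1₀ : 0 ≤ᵐ[muOmega] fun p => (p.1 * |f p|) ^ 2 * p.1 := by
    filter_upwards [hr] with p hp
    positivity
  have h2₀ : 0 ≤ᵐ[muOmega] fun p => |f p| / p.1 := by
    filter_upwards [hr] with p hp
    positivity
  have hsplit : (fun p => |f p| ^ ((3 : ℝ) / 2) * p.1) =ᵐ[muOmega]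
      fun p => √((p.1 * |f p|) ^ 2 * p.1) * √(|f p| / p.1) := by
    filter_upwards [hr] with p hp
    exact rpow_three_halves_mul_eq_sqrt_mul_sqrt (abs_nonneg _) hp
  refine ⟨(integrable_sqrt_mul_sqrt h1 h2 h1₀ h2₀).congr hsplit.symm, ?_⟩
  rw [integral_congr_ae hsplit]
  exact rpow_two_div_three_le_of_sq_le_mul two_pi_pos.le
    (integral_nonneg fun p => by positivity) (integral_nonneg_of_ae h1₀)
    (integral_nonneg_of_ae h2₀) (sq_integral_sqrt_mul_sqrt_le h1 h2 h1₀ h2₀)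
end

section
/- Let u : ℝ³ → ℝ be an axisymmetric scalar function (e.g. a velocity component), and suppose r u ∈ L^∞(ℝ³), r^{-1/4} u ∈ L⁴(ℝ³). Let g : ℝ³ → ℝ satisfy g ∈ L²(ℝ³) and r^{-1/4} g ∈ L⁴(ℝ³). Then u·g ∈ L²(ℝ³) with ‖u g‖_{L²(ℝ³)} ≤ ‖r u‖_{L^∞}^{1/3} · ‖r^{-1/4} u‖_{L⁴}^{2/3} · ‖r^{-1/4} g‖_{L⁴}^{2/3} · ‖g‖_{L²}^{1/3}. -/
open MeasureTheory Real
open scoped ENNReal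

/-- Three-function Hölder-type bound for real integrals. -/
lemma holder3 {α : Type*} [MeasurableSpace α] {μ : Measure α} {f a b c : α → ℝ}
    (hfm : AEStronglyMeasurable f μ) (hf0 : 0 ≤ᵐ[μ] f)
    (ha : Integrable a μ) (hb : Integrable b μ) (hc : Integrable c μ)
    (ha0 : 0 ≤ᵐ[μ] a) (hb0 : 0 ≤ᵐ[μ] b) (hc0 : 0 ≤ᵐ[μ] c)
    (hle : f ≤ᵐ[μ] fun x => a x ^ ((1:ℝ)/3) * b x ^ ((1:ℝ)/3) * c x ^ ((1:ℝ)/3)) :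
    ∫ x, f x ∂μ ≤
      (∫ x, a x ∂μ) ^ ((1:ℝ)/3) * (∫ x, b x ∂μ) ^ ((1:ℝ)/3) * (∫ x, c x ∂μ) ^ ((1:ℝ)/3) := by
  have hA0 : 0 ≤ ∫ x, a x ∂μ := integral_nonneg_of_ae ha0
  have hB0 : 0 ≤ ∫ x, b x ∂μ := integral_nonneg_of_ae hb0
  have hC0 : 0 ≤ ∫ x, c x ∂μ := integral_nonneg_of_ae hc0
  set F : α → ℝ≥0∞ := fun x => ENNReal.ofReal (a x)
  set G : α → ℝ≥0∞ := fun x => ENNReal.ofReal (b x)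
  set H : α → ℝ≥0∞ := fun x => ENNReal.ofReal (c x)
  have hFm : AEMeasurable F μ := ha.aestronglyMeasurable.aemeasurable.ennreal_ofReal
  have hGm : AEMeasurable G μ := hb.aestronglyMeasurable.aemeasurable.ennreal_ofReal
  have hHm : AEMeasurable H μ := hc.aestronglyMeasurable.aemeasurable.ennreal_ofReal
  have hFint : ∫⁻ x, F x ∂μ = ENNReal.ofReal (∫ x, a x ∂μ) :=
    (ofReal_integral_eq_lintegral_ofReal ha ha0).symm
  have hGint : ∫⁻ x, G x ∂μ = ENNReal.ofReal (∫ x, b x ∂μ) :=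
    (ofReal_integral_eq_lintegral_ofReal hb hb0).symm
  have hHint : ∫⁻ x, H x ∂μ = ENNReal.ofReal (∫ x, c x ∂μ) :=
    (ofReal_integral_eq_lintegral_ofReal hc hc0).symm
  have key : ∫⁻ x, ENNReal.ofReal (f x) ∂μ ≤
      (∫⁻ x, F x ∂μ) ^ ((1:ℝ)/3) * (∫⁻ x, G x ∂μ) ^ ((1:ℝ)/3) * (∫⁻ x, H x ∂μ) ^ ((1:ℝ)/3) := by
    have step1 : ∫⁻ x, ENNReal.ofReal (f x) ∂μ ≤
        ∫⁻ x, F x ^ ((1:ℝ)/3) * G x ^ ((1:ℝ)/3) * H x ^ ((1:ℝ)/3) ∂μ := by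
      refine lintegral_mono_ae ?_
      filter_upwards [hle, ha0, hb0, hc0] with x hx hax hbx hcx
      calc ENNReal.ofReal (f x)
          ≤ ENNReal.ofReal (a x ^ ((1:ℝ)/3) * b x ^ ((1:ℝ)/3) * c x ^ ((1:ℝ)/3)) :=
            ENNReal.ofReal_le_ofReal hx
        _ = F x ^ ((1:ℝ)/3) * G x ^ ((1:ℝ)/3) * H x ^ ((1:ℝ)/3) := by
            rw [ENNReal.ofReal_mul (mul_nonneg (Real.rpow_nonneg hax _) (Real.rpow_nonneg hbx _)),
              ENNReal.ofReal_mul (Real.rpow_nonneg hax _),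
              ENNReal.ofReal_rpow_of_nonneg hax (by norm_num),
              ENNReal.ofReal_rpow_of_nonneg hbx (by norm_num),
              ENNReal.ofReal_rpow_of_nonneg hcx (by norm_num)]
    refine step1.trans ?_
    have h2 : ∫⁻ x, (fun x => F x ^ ((1:ℝ)/2) * G x ^ ((1:ℝ)/2)) x ^ ((2:ℝ)/3) * H x ^ ((1:ℝ)/3) ∂μ
        ≤ (∫⁻ x, F x ^ ((1:ℝ)/2) * G x ^ ((1:ℝ)/2) ∂μ) ^ ((2:ℝ)/3) * (∫⁻ x, H x ∂μ) ^ ((1:ℝ)/3) :=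
      ENNReal.lintegral_mul_norm_pow_le
        ((hFm.pow_const _).mul (hGm.pow_const _)) hHm (by norm_num) (by norm_num) (by norm_num)
    have heq : ∀ x, F x ^ ((1:ℝ)/3) * G x ^ ((1:ℝ)/3) * H x ^ ((1:ℝ)/3)
        = (F x ^ ((1:ℝ)/2) * G x ^ ((1:ℝ)/2)) ^ ((2:ℝ)/3) * H x ^ ((1:ℝ)/3) := by
      intro x
      rw [ENNReal.mul_rpow_of_nonneg _ _ (by norm_num : (0:ℝ) ≤ 2/3),
        ← ENNReal.rpow_mul, ← ENNReal.rpow_mul]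
      norm_num
    calc ∫⁻ x, F x ^ ((1:ℝ)/3) * G x ^ ((1:ℝ)/3) * H x ^ ((1:ℝ)/3) ∂μ
        = ∫⁻ x, (F x ^ ((1:ℝ)/2) * G x ^ ((1:ℝ)/2)) ^ ((2:ℝ)/3) * H x ^ ((1:ℝ)/3) ∂μ := by
          simp_rw [heq]
      _ ≤ (∫⁻ x, F x ^ ((1:ℝ)/2) * G x ^ ((1:ℝ)/2) ∂μ) ^ ((2:ℝ)/3) * (∫⁻ x, H x ∂μ) ^ ((1:ℝ)/3) := h2
      _ ≤ ((∫⁻ x, F x ∂μ) ^ ((1:ℝ)/2) * (∫⁻ x, G x ∂μ) ^ ((1:ℝ)/2)) ^ ((2:ℝ)/3)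
            * (∫⁻ x, H x ∂μ) ^ ((1:ℝ)/3) := by
          gcongr
          exact ENNReal.lintegral_mul_norm_pow_le hFm hGm (by norm_num) (by norm_num) (by norm_num)
      _ = (∫⁻ x, F x ∂μ) ^ ((1:ℝ)/3) * (∫⁻ x, G x ∂μ) ^ ((1:ℝ)/3) * (∫⁻ x, H x ∂μ) ^ ((1:ℝ)/3) := by
          rw [ENNReal.mul_rpow_of_nonneg _ _ (by norm_num : (0:ℝ) ≤ 2/3),
            ← ENNReal.rpow_mul, ← ENNReal.rpow_mul]
          norm_num
  have hIf : ∫ x, f x ∂μ = (∫⁻ x, ENNReal.ofReal (f x) ∂μ).toReal := by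
    rw [integral_eq_lintegral_of_nonneg_ae hf0 hfm]
  rw [hIf]
  have hRHS : ((∫⁻ x, F x ∂μ) ^ ((1:ℝ)/3) * (∫⁻ x, G x ∂μ) ^ ((1:ℝ)/3)
      * (∫⁻ x, H x ∂μ) ^ ((1:ℝ)/3)).toReal
      = (∫ x, a x ∂μ) ^ ((1:ℝ)/3) * (∫ x, b x ∂μ) ^ ((1:ℝ)/3) * (∫ x, c x ∂μ) ^ ((1:ℝ)/3) := by
    rw [hFint, hGint, hHint,
      ENNReal.ofReal_rpow_of_nonneg hA0 (by norm_num),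
      ENNReal.ofReal_rpow_of_nonneg hB0 (by norm_num),
      ENNReal.ofReal_rpow_of_nonneg hC0 (by norm_num),
      ← ENNReal.ofReal_mul (by positivity), ← ENNReal.ofReal_mul (by positivity),
      ENNReal.toReal_ofReal (by positivity)]
  rw [← hRHS]
  refine ENNReal.toReal_mono ?_ key
  rw [hFint, hGint, hHint]
  exact ENNReal.mul_ne_top (ENNReal.mul_ne_top
    (ENNReal.rpow_ne_top_of_nonneg (by norm_num) ENNReal.ofReal_ne_top)
    (ENNReal.rpow_ne_top_of_nonneg (by norm_num) ENNReal.ofReal_ne_top))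
    (ENNReal.rpow_ne_top_of_nonneg (by norm_num) ENNReal.ofReal_ne_top)

theorem stmt13 (u g : ℝ × ℝ → ℝ) (M : ℝ) (hM0 : 0 ≤ M)
    (hM : ∀ᵐ p ∂muOmega, p.1 * |u p| ≤ M)
    (hu4 : Integrable (fun p => (p.1 ^ (-(1 : ℝ) / 4) * |u p|) ^ 4 * p.1) muOmega)
    (hg2 : Integrable (fun p => g p ^ 2 * p.1) muOmega)
    (hg4 : Integrable (fun p => (p.1 ^ (-(1 : ℝ) / 4) * |g p|) ^ 4 * p.1) muOmega) :
    Integrable (fun p => (u p * g p) ^ 2 * p.1) muOmega ∧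
      (2 * π * ∫ p, (u p * g p) ^ 2 * p.1 ∂muOmega) ^ ((1 : ℝ) / 2)
        ≤ M ^ ((1 : ℝ) / 3) *
          ((2 * π * ∫ p, (p.1 ^ (-(1 : ℝ) / 4) * |u p|) ^ 4 * p.1 ∂muOmega) ^ ((1 : ℝ) / 4)) ^ ((2 : ℝ) / 3) *
          ((2 * π * ∫ p, (p.1 ^ (-(1 : ℝ) / 4) * |g p|) ^ 4 * p.1 ∂muOmega) ^ ((1 : ℝ) / 4)) ^ ((2 : ℝ) / 3) *
          ((2 * π * ∫ p, g p ^ 2 * p.1 ∂muOmega) ^ ((1 : ℝ) / 2)) ^ ((1 : ℝ) / 3) := by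
  -- a.e. positivity of the first coordinate
  have hr : ∀ᵐ p ∂muOmega, 0 < p.1 := by
    rw [muOmega]
    exact ae_restrict_mem (measurableSet_lt measurable_const measurable_fst)
  -- simplify the weighted integrands a.e.
  have hkey : ∀ x r : ℝ, 0 < r → (r ^ (-(1 : ℝ) / 4) * |x|) ^ 4 * r = |x| ^ 4 := by
    intro x r hrpos
    rw [mul_pow, ← Real.rpow_natCast (r ^ (-(1 : ℝ) / 4)) 4, ← Real.rpow_mul hrpos.le]
    norm_num
    rw [Real.rpow_neg_one]
    field_simp
  have hau : (fun p : ℝ × ℝ => (p.1 ^ (-(1 : ℝ) / 4) * |u p|) ^ 4 * p.1)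
      =ᵐ[muOmega] fun p => |u p| ^ 4 := hr.mono fun p hp => hkey _ _ hp
  have hag : (fun p : ℝ × ℝ => (p.1 ^ (-(1 : ℝ) / 4) * |g p|) ^ 4 * p.1)
      =ᵐ[muOmega] fun p => |g p| ^ 4 := hr.mono fun p hp => hkey _ _ hp
  have haU : Integrable (fun p => |u p| ^ 4) muOmega := hu4.congr hau
  have haG : Integrable (fun p => |g p| ^ 4) muOmega := hg4.congr hag
  have haMU : Integrable (fun p => M ^ 2 * |u p| ^ 4) muOmega := haU.const_mul _
  -- measurability of the target function
  have habs4 : ∀ x : ℝ, |x| ^ 4 = x ^ 4 := fun x => by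
    rw [← abs_pow, abs_of_nonneg (by positivity : (0:ℝ) ≤ x ^ 4)]
  have hsq : ∀ v : ℝ × ℝ → ℝ, AEStronglyMeasurable (fun p => |v p| ^ 4) muOmega →
      AEStronglyMeasurable (fun p => v p ^ 2) muOmega := by
    intro v hv
    have : (fun p => v p ^ 2) = fun p => Real.sqrt (|v p| ^ 4) := by
      funext p
      rw [show |v p| ^ 4 = (v p ^ 2) ^ 2 by rw [habs4]; ring, Real.sqrt_sq (sq_nonneg _)]
    rw [this]
    exact Real.continuous_sqrt.comp_aestronglyMeasurable hv
  have hu2m := hsq u haU.aestronglyMeasurable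
  have hg2m := hsq g haG.aestronglyMeasurable
  have hfm : AEStronglyMeasurable (fun p : ℝ × ℝ => (u p * g p) ^ 2 * p.1) muOmega := by
    have : (fun p : ℝ × ℝ => (u p * g p) ^ 2 * p.1)
        = fun p => u p ^ 2 * g p ^ 2 * p.1 := by funext p; ring
    rw [this]
    exact (hu2m.mul hg2m).mul measurable_fst.aestronglyMeasurable
  -- nonnegativity a.e.
  have hf0 : 0 ≤ᵐ[muOmega] fun p : ℝ × ℝ => (u p * g p) ^ 2 * p.1 :=
    hr.mono fun p hp => mul_nonneg (sq_nonneg _) hp.le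
  have hc0 : 0 ≤ᵐ[muOmega] fun p : ℝ × ℝ => g p ^ 2 * p.1 :=
    hr.mono fun p hp => mul_nonneg (sq_nonneg _) hp.le
  have ha0 : 0 ≤ᵐ[muOmega] fun p : ℝ × ℝ => M ^ 2 * |u p| ^ 4 :=
    Filter.Eventually.of_forall fun p => by positivity
  have hb0 : 0 ≤ᵐ[muOmega] fun p : ℝ × ℝ => |g p| ^ 4 :=
    Filter.Eventually.of_forall fun p => by positivity
  -- the pointwise Hölder-style bound
  have hcube : ∀ z : ℝ, 0 ≤ z → (z ^ ((1 : ℝ) / 3)) ^ 3 = z := by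
    intro z hz
    rw [← Real.rpow_natCast (z ^ ((1 : ℝ) / 3)) 3, ← Real.rpow_mul hz]
    norm_num
  have hbound : ∀ᵐ p ∂muOmega, (u p * g p) ^ 2 * p.1 ≤
      (M ^ 2 * |u p| ^ 4) ^ ((1 : ℝ) / 3) * (|g p| ^ 4) ^ ((1 : ℝ) / 3)
        * (g p ^ 2 * p.1) ^ ((1 : ℝ) / 3) := by
    filter_upwards [hr, hM] with p hp hMp
    have hL0 : 0 ≤ (u p * g p) ^ 2 * p.1 := mul_nonneg (sq_nonneg _) hp.le
    have hR0 : 0 ≤ (M ^ 2 * |u p| ^ 4) ^ ((1 : ℝ) / 3) * (|g p| ^ 4) ^ ((1 : ℝ) / 3)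
        * (g p ^ 2 * p.1) ^ ((1 : ℝ) / 3) := by positivity
    rw [← pow_le_pow_iff_left₀ hL0 hR0 (three_ne_zero)]
    have e1 : ((M ^ 2 * |u p| ^ 4) ^ ((1 : ℝ) / 3) * (|g p| ^ 4) ^ ((1 : ℝ) / 3)
        * (g p ^ 2 * p.1) ^ ((1 : ℝ) / 3)) ^ 3
        = (M ^ 2 * |u p| ^ 4) * (|g p| ^ 4) * (g p ^ 2 * p.1) := by
      rw [mul_pow, mul_pow, hcube _ (by positivity), hcube _ (by positivity),
        hcube _ (mul_nonneg (sq_nonneg _) hp.le)]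
    rw [e1]
    have h1 : (p.1 * |u p|) ^ 2 ≤ M ^ 2 := pow_le_pow_left₀ (by positivity) hMp 2
    have h2 : (0 : ℝ) ≤ u p ^ 4 * g p ^ 6 * p.1 := by
      have := hp.le; positivity
    calc ((u p * g p) ^ 2 * p.1) ^ 3
        = (p.1 * |u p|) ^ 2 * (u p ^ 4 * g p ^ 6 * p.1) := by
          rw [show (p.1 * |u p|) ^ 2 = p.1 ^ 2 * u p ^ 2 by rw [mul_pow, sq_abs]]; ring
      _ ≤ M ^ 2 * (u p ^ 4 * g p ^ 6 * p.1) := mul_le_mul_of_nonneg_right h1 h2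
      _ = (M ^ 2 * |u p| ^ 4) * (|g p| ^ 4) * (g p ^ 2 * p.1) := by
          rw [habs4, habs4]; ring
  -- integrability via AM-GM
  have hdom : Integrable (fun p : ℝ × ℝ => (1 / 3) * (M ^ 2 * |u p| ^ 4)
      + (1 / 3) * |g p| ^ 4 + (1 / 3) * (g p ^ 2 * p.1)) muOmega :=
    ((haMU.const_mul _).add (haG.const_mul _)).add (hg2.const_mul _)
  have hint : Integrable (fun p : ℝ × ℝ => (u p * g p) ^ 2 * p.1) muOmega := by
    refine hdom.mono' hfm ?_
    filter_upwards [hbound, hf0, hr] with p hbp hfp hp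
    rw [Real.norm_eq_abs, abs_of_nonneg hfp]
    refine hbp.trans ?_
    exact Real.geom_mean_le_arith_mean3_weighted (by norm_num) (by norm_num) (by norm_num)
      (by positivity) (by positivity) (mul_nonneg (sq_nonneg _) hp.le) (by norm_num)
  refine ⟨hint, ?_⟩
  -- main integral inequality
  set A := ∫ p, (p.1 ^ (-(1 : ℝ) / 4) * |u p|) ^ 4 * p.1 ∂muOmega with hA
  set B := ∫ p, (p.1 ^ (-(1 : ℝ) / 4) * |g p|) ^ 4 * p.1 ∂muOmega with hB
  set C := ∫ p, g p ^ 2 * p.1 ∂muOmega with hC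
  set I := ∫ p, (u p * g p) ^ 2 * p.1 ∂muOmega with hI
  have hAeq : ∫ p, M ^ 2 * |u p| ^ 4 ∂muOmega = M ^ 2 * A := by
    rw [integral_const_mul, hA, integral_congr_ae hau]
  have hBeq : ∫ p, |g p| ^ 4 ∂muOmega = B := by rw [hB, integral_congr_ae hag]
  have hmain : I ≤ (M ^ 2 * A) ^ ((1 : ℝ) / 3) * B ^ ((1 : ℝ) / 3) * C ^ ((1 : ℝ) / 3) := by
    have := holder3 hfm hf0 haMU haG hg2 ha0 hb0 hc0 hbound
    rwa [hAeq, hBeq] at this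
  have hA0 : 0 ≤ A := integral_nonneg_of_ae (hr.mono fun p hp =>
    mul_nonneg (by positivity) hp.le)
  have hB0 : 0 ≤ B := integral_nonneg_of_ae (hr.mono fun p hp =>
    mul_nonneg (by positivity) hp.le)
  have hC0 : 0 ≤ C := integral_nonneg_of_ae hc0
  have hI0 : 0 ≤ I := integral_nonneg_of_ae hf0
  have h2pi : (0 : ℝ) ≤ 2 * π := by positivity
  have hM2A0 : 0 ≤ M ^ 2 * A := by positivity
  calc (2 * π * I) ^ ((1 : ℝ) / 2)
      = (2 * π) ^ ((1 : ℝ) / 2) * I ^ ((1 : ℝ) / 2) := Real.mul_rpow h2pi hI0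
    _ ≤ (2 * π) ^ ((1 : ℝ) / 2)
          * ((M ^ 2 * A) ^ ((1 : ℝ) / 3) * B ^ ((1 : ℝ) / 3) * C ^ ((1 : ℝ) / 3)) ^ ((1 : ℝ) / 2) :=
        mul_le_mul_of_nonneg_left (Real.rpow_le_rpow hI0 hmain (by norm_num))
          (Real.rpow_nonneg h2pi _)
    _ = M ^ ((1 : ℝ) / 3) * ((2 * π * A) ^ ((1 : ℝ) / 4)) ^ ((2 : ℝ) / 3)
          * ((2 * π * B) ^ ((1 : ℝ) / 4)) ^ ((2 : ℝ) / 3)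
          * ((2 * π * C) ^ ((1 : ℝ) / 2)) ^ ((1 : ℝ) / 3) := by
        have h1 : ((M ^ 2 * A) ^ ((1 : ℝ) / 3) * B ^ ((1 : ℝ) / 3) * C ^ ((1 : ℝ) / 3)) ^ ((1 : ℝ) / 2)
            = (M ^ 2 * A) ^ ((1 : ℝ) / 6) * B ^ ((1 : ℝ) / 6) * C ^ ((1 : ℝ) / 6) := by
          rw [Real.mul_rpow (mul_nonneg (Real.rpow_nonneg hM2A0 _) (Real.rpow_nonneg hB0 _))
              (Real.rpow_nonneg hC0 _),
            Real.mul_rpow (Real.rpow_nonneg hM2A0 _) (Real.rpow_nonneg hB0 _),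
            ← Real.rpow_mul hM2A0, ← Real.rpow_mul hB0, ← Real.rpow_mul hC0]
          norm_num
        have h2 : (M ^ 2 * A) ^ ((1 : ℝ) / 6) = M ^ ((1 : ℝ) / 3) * A ^ ((1 : ℝ) / 6) := by
          rw [Real.mul_rpow (by positivity) hA0, ← Real.rpow_natCast M 2,
            ← Real.rpow_mul hM0]
          norm_num
        have h3 : ((2 * π * A) ^ ((1 : ℝ) / 4)) ^ ((2 : ℝ) / 3)
            = (2 * π) ^ ((1 : ℝ) / 6) * A ^ ((1 : ℝ) / 6) := by
          rw [← Real.rpow_mul (mul_nonneg h2pi hA0),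
            show (1 : ℝ) / 4 * (2 / 3) = 1 / 6 by norm_num, Real.mul_rpow h2pi hA0]
        have h4 : ((2 * π * B) ^ ((1 : ℝ) / 4)) ^ ((2 : ℝ) / 3)
            = (2 * π) ^ ((1 : ℝ) / 6) * B ^ ((1 : ℝ) / 6) := by
          rw [← Real.rpow_mul (mul_nonneg h2pi hB0),
            show (1 : ℝ) / 4 * (2 / 3) = 1 / 6 by norm_num, Real.mul_rpow h2pi hB0]
        have h5 : ((2 * π * C) ^ ((1 : ℝ) / 2)) ^ ((1 : ℝ) / 3)
            = (2 * π) ^ ((1 : ℝ) / 6) * C ^ ((1 : ℝ) / 6) := by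
          rw [← Real.rpow_mul (mul_nonneg h2pi hC0),
            show (1 : ℝ) / 2 * (1 / 3) = 1 / 6 by norm_num, Real.mul_rpow h2pi hC0]
        have h6 : (2 * π) ^ ((1 : ℝ) / 2)
            = (2 * π) ^ ((1 : ℝ) / 6) * (2 * π) ^ ((1 : ℝ) / 6) * (2 * π) ^ ((1 : ℝ) / 6) := by
          rw [← Real.rpow_add (by positivity : (0 : ℝ) < 2 * π),
            ← Real.rpow_add (by positivity : (0 : ℝ) < 2 * π)]
          norm_num
        rw [h1, h2, h3, h4, h5, h6]
        ring
end
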